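/- Let B, C be categories, F₁ : B^{α¹} → C, F₂ : B^{α²} → C, F₃ : B^{α³} → C functors, φ : F₁ → F₂ a transformation of type |α¹| —σ₁→ k₁ ←τ₁— |α²| and ψ : F₂ → F₃ a transformation of type |α²| —σ₂→ k₂ ←τ₂— |α³|, both dinatural in all of their variables. Suppose the pushout of τ₁ and σ₂ defining the type of ψ∘φ has vertex l = 1, i.e. ψ∘φ depends on only one variable. If the composite graph Γ(ψ) ∘ Γ(φ) is acyclic, then ψ∘φ is dinatural (in its unique variable). -/

import Mathlib

open CategoryTheory Opposite

universe v u v' u'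

/-- `SignObj B s` is `B` if the sign `s` is `true` (covariant) and `Bᵒᵖ` if `s` is `false`. -/
def SignObj (B : Type u) : Bool → Type u
  | true => B
  | false => Bᵒᵖ

instance signObjCategory (B : Type u) [Category.{v} B] : ∀ s : Bool, Category.{v} (SignObj B s)
  | true => inferInstanceAs (Category.{v} B)
  | false => inferInstanceAs (Category.{v} Bᵒᵖ)

/-- Interpret an object of `B` as an object of `B` or `Bᵒᵖ`, according to a sign. -/
def toSign {B : Type u} : ∀ s : Bool, B → SignObj B s
  | true, X => X
  | false, X => op X

/-- Forget the sign of an object. -/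
def unSign {B : Type u} : ∀ {s : Bool}, SignObj B s → B
  | true, X => X
  | false, X => unop X

/-- A morphism of `B`, pointing in a direction prescribed by a sign. -/
def SignHom {B : Type u} [Category.{v} B] : Bool → B → B → Type v
  | true, X, Y => X ⟶ Y
  | false, X, Y => Y ⟶ X

def toSignHom {B : Type u} [Category.{v} B] : ∀ {s : Bool} {X Y : B},
    SignHom s X Y → (toSign s X ⟶ toSign s Y)
  | true, _, _, f => f
  | false, _, _, f => f.op

def signId {B : Type u} [Category.{v} B] : ∀ (s : Bool) (X : B), SignHom s X X
  | true, X => 𝟙 X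
  | false, X => 𝟙 X

/-- The mixed-variance power category `B^α`. -/
abbrev PowCat (B : Type u) [Category.{v} B] {κ : Type} (α : κ → Bool) : Type u :=
  ∀ j : κ, SignObj B (α j)

/-- The object of `B^α` whose `j`-th entry is `A (σ j)`. -/
abbrev tup {B : Type u} [Category.{v} B] {κ ι : Type} (α : κ → Bool) (σ : κ → ι)
    (A : ι → B) : PowCat B α :=
  fun j => toSign (α j) (A (σ j))

/-- A transformation `φ : F → G` of type `σ, τ`: a family of morphisms
`φ_𝐀 : F (𝐀 σ) ⟶ G (𝐀 τ)` indexed by tuples `𝐀` of objects of `B`. -/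
def Transf {B : Type u} [Category.{v} B] {C : Type u'} [Category.{v'} C] {κa κb ι : Type}
    (α : κa → Bool) (β : κb → Bool) (F : PowCat B α ⥤ C) (G : PowCat B β ⥤ C)
    (σ : κa → ι) (τ : κb → ι) : Type _ :=
  ∀ A : ι → B, F.obj (tup α σ A) ⟶ G.obj (tup β τ A)

/-- The tuple `A` with its `i`-th entry replaced by `X`. -/
abbrev upd {ι : Type} [DecidableEq ι] {B : Type u} (A : ι → B) (i : ι) (X : B) : ι → B :=
  fun k => if k = i then X else A k

/-- The mixed-variance tuple `𝐀[X,Y/i]σ`: entries over the `i`-th variable are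
`e false` in contravariant positions, `e true` in covariant ones. -/
abbrev tupMV {B : Type u} [Category.{v} B] {κ ι : Type} [DecidableEq ι] (α : κ → Bool)
    (σ : κ → ι) (A : ι → B) (i : ι) (e : Bool → B) : PowCat B α :=
  fun j => toSign (α j) (if σ j = i then e (α j) else A (σ j))

def mvHom {B : Type u} [Category.{v} B] {e₁ e₂ : Bool → B}
    (g : e₂ false ⟶ e₁ false) (h : e₁ true ⟶ e₂ true) :
    ∀ s : Bool, SignHom s (e₁ s) (e₂ s)
  | true => h
  | false => g

/-- The canonical morphism `tupMV α σ A i e₁ ⟶ tupMV α σ A i e₂` acting by `h` on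
covariant entries over `i`, (the opposite of) `g` on contravariant entries over `i`, and
the identity elsewhere. -/
def tupMVHom {B : Type u} [Category.{v} B] {κ ι : Type} [DecidableEq ι] (α : κ → Bool)
    (σ : κ → ι) (A : ι → B) (i : ι) (e₁ e₂ : Bool → B)
    (g : e₂ false ⟶ e₁ false) (h : e₁ true ⟶ e₂ true) :
    tupMV α σ A i e₁ ⟶ tupMV α σ A i e₂ :=
  fun j => toSignHom
    (show SignHom (α j) (if σ j = i then e₁ (α j) else A (σ j))
        (if σ j = i then e₂ (α j) else A (σ j)) from
      if hj : σ j = i then by simp only [if_pos hj]; exact mvHom g h (α j)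
      else by simp only [if_neg hj]; exact signId (α j) (A (σ j)))

/-- Dinaturality of a transformation in its `i`-th variable. -/
def DinatAt {B : Type u} [Category.{v} B] {C : Type u'} [Category.{v'} C] {κa κb ι : Type}
    [DecidableEq ι] {α : κa → Bool} {β : κb → Bool} {F : PowCat B α ⥤ C} {G : PowCat B β ⥤ C}
    {σ : κa → ι} {τ : κb → ι} (φ : Transf α β F G σ τ) (i : ι) : Prop :=
  ∀ (A : ι → B) {X Y : B} (f : X ⟶ Y),
    F.map (tupMVHom α σ A i (fun s => bif s then X else Y) (fun _ => X) f (𝟙 X)) ≫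
        φ (upd A i X) ≫
        G.map (tupMVHom β τ A i (fun _ => X) (fun s => bif s then Y else X) (𝟙 X) f) =
      F.map (tupMVHom α σ A i (fun s => bif s then X else Y) (fun _ => Y) (𝟙 Y) f) ≫
        φ (upd A i Y) ≫
        G.map (tupMVHom β τ A i (fun _ => Y) (fun s => bif s then Y else X) f (𝟙 Y))

/-- Vertical composition of transformations along a cocone `ζ, ξ` on their types. -/
def vcomp {B : Type u} [Category.{v} B] {C : Type u'} [Category.{v'} C]
    {κa κb κc ι₁ ι₂ ι : Type} {α : κa → Bool} {β : κb → Bool} {γ : κc → Bool}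
    {F : PowCat B α ⥤ C} {G : PowCat B β ⥤ C} {H : PowCat B γ ⥤ C}
    {σ : κa → ι₁} {τ : κb → ι₁} {η : κb → ι₂} {θ : κc → ι₂}
    (φ : Transf α β F G σ τ) (ψ : Transf β γ G H η θ)
    (ζ : ι₁ → ι) (ξ : ι₂ → ι) (hcomm : ∀ p, ζ (τ p) = ξ (η p)) :
    Transf α γ F H (fun p => ζ (σ p)) (fun p => ξ (θ p)) :=
  fun A =>
    φ (fun x => A (ζ x)) ≫
      eqToHom (congrArg G.obj (by
        funext j
        show toSign (β j) (A (ζ (τ j))) = toSign (β j) (A (ξ (η j)))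
        rw [hcomm j])) ≫
      ψ (fun x => A (ξ x))

section CompositeGraph

/-- Vertices of the composite graph `Γ(ψ) ∘ Γ(φ)`: the places are the arguments of the
three functors involved (with the middle ones identified), the transitions are the
variables of the two transformations. -/
abbrev CGV (wa wb wc n m : ℕ) : Type :=
  (Fin wa ⊕ Fin wb ⊕ Fin wc) ⊕ (Fin n ⊕ Fin m)

variable {wa wb wc n m l : ℕ}

/-- The arcs of the composite graph `Γ(ψ) ∘ Γ(φ)` of two consecutive transformations of
types `σ₁, τ₁` and `σ₂, τ₂` between functors of variances `α, β` and `β, γ`. -/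
def compArc (α : Fin wa → Bool) (β : Fin wb → Bool) (γ : Fin wc → Bool)
    (σ₁ : Fin wa → Fin n) (τ₁ : Fin wb → Fin n)
    (σ₂ : Fin wb → Fin m) (τ₂ : Fin wc → Fin m) :
    CGV wa wb wc n m → CGV wa wb wc n m → Prop
  | .inl (.inl p), .inr (.inl t) => σ₁ p = t ∧ α p = true
  | .inr (.inl t), .inl (.inl p) => σ₁ p = t ∧ α p = false
  | .inl (.inr (.inl p)), .inr (.inl t) => τ₁ p = t ∧ β p = false
  | .inr (.inl t), .inl (.inr (.inl p)) => τ₁ p = t ∧ β p = true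
  | .inl (.inr (.inl p)), .inr (.inr t) => σ₂ p = t ∧ β p = true
  | .inr (.inr t), .inl (.inr (.inl p)) => σ₂ p = t ∧ β p = false
  | .inl (.inr (.inr p)), .inr (.inr t) => τ₂ p = t ∧ γ p = false
  | .inr (.inr t), .inl (.inr (.inr p)) => τ₂ p = t ∧ γ p = true
  | _, _ => False

/-- The connected component (labelled by the pushout vertex `Fin l`) to which each
vertex of the composite graph belongs. -/
def compOfV (σ₁ : Fin wa → Fin n) (τ₁ : Fin wb → Fin n)
    (σ₂ : Fin wb → Fin m) (τ₂ : Fin wc → Fin m)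
    (ζ : Fin n → Fin l) (ξ : Fin m → Fin l) :
    CGV wa wb wc n m → Fin l
  | .inl (.inl p) => ζ (σ₁ p)
  | .inl (.inr (.inl p)) => ζ (τ₁ p)
  | .inl (.inr (.inr p)) => ξ (τ₂ p)
  | .inr (.inl t) => ζ t
  | .inr (.inr t) => ξ t

end CompositeGraph

/-!
Fix `f : X ⟶ Y` and mark every variable of `φ` and of `ψ` with `X` (`false`) or `Y` (`true`).
If, for each argument of `F₂`, the marks of the variable of `φ` and of the variable of `ψ` it
belongs to are compatible with its variance, then `φ` and `ψ` evaluated at the marks, padded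
with `f` and identities, compose to a morphism between two fixed objects. The two sides of the
dinaturality equation of `ψ ∘ φ` are its values at the all-`X` and the all-`Y` markings.
Switching one variable from `X` to `Y` does not change the value, by dinaturality of `φ` or `ψ`
in that variable, provided every variable it feeds through an argument of `F₂` is already
marked `Y`. Acyclicity of `Γ(ψ) ∘ Γ(φ)` provides such a variable as long as some variable is
still marked `X`, so the all-`Y` marking is reached from the all-`X` one.
-/

theorem exists_forall_not_transGen_of_acyclic {V : Type*} [Finite V] {r : V → V → Prop}
    (hr : ∀ v, ¬ Relation.TransGen r v v) {S : Set V} (hS : S.Nonempty) :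
    ∃ a ∈ S, ∀ b ∈ S, ¬ Relation.TransGen r a b := by
  have wf : WellFounded (flip (Relation.TransGen r)) :=
    @Finite.wellFounded_of_trans_of_irrefl _ _ _ ⟨fun _ _ _ hab hbc => hbc.trans hab⟩ ⟨hr⟩
  exact wf.has_min S hS

theorem lt_upd_of_lt {ι : Type} [DecidableEq ι] {β : Type u} [Preorder β] {c : ι → β} {t : ι}
    {v : β} (h : c t < v) : c < upd c t v := by
  have : upd c t v = Function.update c t v := funext fun k => (Function.update_apply ..).symm
  rwa [this, lt_update_self_iff]

theorem upd_self_of_eq {ι : Type} [DecidableEq ι] {β : Type u} {c : ι → β} {t : ι} {v : β}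
    (h : c t = v) : upd c t v = c :=
  funext fun k => by by_cases hk : k = t <;> simp [upd, hk, h]

section Markings

variable {B : Type u} [Category.{v} B]

@[reducible] def boolObj (X Y : B) (b : Bool) : B := bif b then Y else X

def boolHom {X Y : B} (f : X ⟶ Y) : ∀ b₁ b₂ : Bool, b₁ ≤ b₂ → (boolObj X Y b₁ ⟶ boolObj X Y b₂)
  | false, false, _ => 𝟙 X
  | false, true, _ => f
  | true, true, _ => 𝟙 Y
  | true, false, h => absurd h (by decide)

theorem boolHom_comp {X Y : B} (f : X ⟶ Y) {b₁ b₂ b₃ : Bool} (h₁₂ : b₁ ≤ b₂) (h₂₃ : b₂ ≤ b₃) :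
    boolHom f b₁ b₂ h₁₂ ≫ boolHom f b₂ b₃ h₂₃ = boolHom f b₁ b₃ (h₁₂.trans h₂₃) := by
  cases b₁ <;> cases b₂ <;> cases b₃ <;>
    first | exact absurd ‹true ≤ false› (by decide) | simp [boolHom]

theorem boolHom_self {X Y : B} (f : X ⟶ Y) (b : Bool) :
    boolHom f b b le_rfl = 𝟙 (boolObj X Y b) := by
  cases b <;> rfl

def SignLE : Bool → Bool → Bool → Prop
  | true, b₁, b₂ => b₁ ≤ b₂
  | false, b₁, b₂ => b₂ ≤ b₁

theorem SignLE.refl (s b : Bool) : SignLE s b b := by cases s <;> exact le_rfl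

theorem SignLE.trans {s b₁ b₂ b₃ : Bool} (h₁₂ : SignLE s b₁ b₂) (h₂₃ : SignLE s b₂ b₃) :
    SignLE s b₁ b₃ := by
  cases s
  · exact le_trans (α := Bool) h₂₃ h₁₂
  · exact le_trans (α := Bool) h₁₂ h₂₃

theorem SignLE.not_self_left (s b : Bool) : SignLE s (!s) b := by
  cases s
  · exact Bool.le_true b
  · exact Bool.false_le b

theorem SignLE.self_right (s b : Bool) : SignLE s b s := by
  cases s
  · exact Bool.false_le b
  · exact Bool.le_true b

theorem SignLE.not_self_of_false_of_true {s x : Bool} (h₀ : SignLE s x false)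
    (h₁ : SignLE s x true) : SignLE s x (!s) := by
  cases s
  exacts [h₁, h₀]

theorem SignLE.self_of_false_of_true {s x : Bool} (h₀ : SignLE s false x)
    (h₁ : SignLE s true x) : SignLE s s x := by
  cases s
  exacts [h₀, h₁]

def signedBoolHom {X Y : B} (f : X ⟶ Y) : ∀ (s b₁ b₂ : Bool), SignLE s b₁ b₂ →
    SignHom s (boolObj X Y b₁) (boolObj X Y b₂)
  | true, _, _, h => boolHom f _ _ h
  | false, _, _, h => boolHom f _ _ h

@[reducible] def markTup (X Y : B) {κ : Type} (α : κ → Bool) (b : κ → Bool) : PowCat B α :=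
  fun j => toSign (α j) (boolObj X Y (b j))

def markHom {X Y : B} (f : X ⟶ Y) {κ : Type} (α : κ → Bool) (b₁ b₂ : κ → Bool)
    (h : ∀ j, SignLE (α j) (b₁ j) (b₂ j)) : markTup X Y α b₁ ⟶ markTup X Y α b₂ :=
  fun j => toSignHom (signedBoolHom f (α j) (b₁ j) (b₂ j) (h j))

theorem signedBoolHom_comp {X Y : B} (f : X ⟶ Y) {s b₁ b₂ b₃ : Bool} (h₁₂ : SignLE s b₁ b₂)
    (h₂₃ : SignLE s b₂ b₃) :
    toSignHom (signedBoolHom f s b₁ b₂ h₁₂) ≫ toSignHom (signedBoolHom f s b₂ b₃ h₂₃) =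
      toSignHom (signedBoolHom f s b₁ b₃ (h₁₂.trans h₂₃)) := by
  cases s
  · exact op_comp.symm.trans (congrArg Quiver.Hom.op (boolHom_comp f h₂₃ h₁₂))
  · exact boolHom_comp f h₁₂ h₂₃

theorem signedBoolHom_self {X Y : B} (f : X ⟶ Y) (s b : Bool) :
    toSignHom (signedBoolHom f s b b (SignLE.refl s b)) = 𝟙 (toSign s (boolObj X Y b)) := by
  cases s
  · exact congrArg Quiver.Hom.op (boolHom_self f b)
  · exact boolHom_self f b

theorem markHom_comp {X Y : B} (f : X ⟶ Y) {κ : Type} (α : κ → Bool) {b₁ b₂ b₃ : κ → Bool}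
    (h₁₂ : ∀ j, SignLE (α j) (b₁ j) (b₂ j)) (h₂₃ : ∀ j, SignLE (α j) (b₂ j) (b₃ j)) :
    markHom f α b₁ b₂ h₁₂ ≫ markHom f α b₂ b₃ h₂₃ =
      markHom f α b₁ b₃ (fun j => (h₁₂ j).trans (h₂₃ j)) :=
  funext fun j => signedBoolHom_comp f (h₁₂ j) (h₂₃ j)

theorem markHom_self {X Y : B} (f : X ⟶ Y) {κ : Type} (α : κ → Bool) (b : κ → Bool)
    (h : ∀ j, SignLE (α j) (b j) (b j)) : markHom f α b b h = 𝟙 (markTup X Y α b) :=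
  funext fun j => signedBoolHom_self f (α j) (b j)

theorem markHom_eq_eqToHom {X Y : B} (f : X ⟶ Y) {κ : Type}
    (α : κ → Bool) {b₁ b₂ : κ → Bool} (hb : b₁ = b₂) (h : ∀ j, SignLE (α j) (b₁ j) (b₂ j)) :
    markHom f α b₁ b₂ h = eqToHom (congrArg (markTup X Y α) hb) := by
  subst hb
  simp [markHom_self]

end Markings

section Conversion

variable {B : Type u} [Category.{v} B]
variable {κ ι : Type} [DecidableEq ι]

theorem toSignHom_heq {s : Bool} {P Q P' Q' : B} (hP : P = P') (hQ : Q = Q')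
    {x : SignHom s P Q} {y : SignHom s P' Q'} (h : x ≍ y) : toSignHom x ≍ toSignHom y := by
  subst hP hQ
  rw [eq_of_heq h]

theorem PowCat.hom_heq {α : κ → Bool} {P Q P' Q' : PowCat B α} (hP : P = P') (hQ : Q = Q')
    {x : P ⟶ Q} {y : P' ⟶ Q'} (h : ∀ j, x j ≍ y j) : x ≍ y := by
  subst hP hQ
  exact heq_of_eq (funext fun j => eq_of_heq (h j))

theorem tupMVHom_apply_of_eq {α : κ → Bool} {σ : κ → ι} {A : ι → B} {t : ι} {e₁ e₂ : Bool → B}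
    (g : e₂ false ⟶ e₁ false) (h : e₁ true ⟶ e₂ true) {j : κ} (hj : σ j = t) :
    tupMVHom α σ A t e₁ e₂ g h j ≍ toSignHom (mvHom g h (α j)) := by
  unfold tupMVHom
  rw [dif_pos hj]
  exact toSignHom_heq (if_pos hj) (if_pos hj) (cast_heq _ _)

theorem tupMVHom_apply_of_ne {α : κ → Bool} {σ : κ → ι} {A : ι → B} {t : ι} {e₁ e₂ : Bool → B}
    (g : e₂ false ⟶ e₁ false) (h : e₁ true ⟶ e₂ true) {j : κ} (hj : σ j ≠ t) :
    tupMVHom α σ A t e₁ e₂ g h j ≍ 𝟙 (toSign (α j) (A (σ j))) := by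
  unfold tupMVHom
  rw [dif_neg hj]
  refine (toSignHom_heq (if_neg hj) (if_neg hj) (cast_heq _ _)).trans (heq_of_eq ?_)
  cases α j <;> rfl

theorem signedBoolHom_heq {X Y : B} (f : X ⟶ Y) (s : Bool) {b₁ b₂ b₁' b₂' : Bool}
    (h₁ : b₁ = b₁') (h₂ : b₂ = b₂') (h : SignLE s b₁ b₂) (h' : SignLE s b₁' b₂') :
    signedBoolHom f s b₁ b₂ h ≍ signedBoolHom f s b₁' b₂' h' := by
  subst h₁ h₂
  rfl

theorem mvHom_boolHom {X Y : B} (f : X ⟶ Y) {u₁ u₂ : Bool → Bool} (hlo : u₂ false ≤ u₁ false)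
    (hhi : u₁ true ≤ u₂ true) (s : Bool) (hs : SignLE s (u₁ s) (u₂ s)) :
    mvHom (e₁ := fun s => boolObj X Y (u₁ s)) (e₂ := fun s => boolObj X Y (u₂ s))
        (boolHom f (u₂ false) (u₁ false) hlo) (boolHom f (u₁ true) (u₂ true) hhi) s =
      signedBoolHom f s (u₁ s) (u₂ s) hs := by
  cases s <;> rfl

theorem tupMV_eq_markTup (α : κ → Bool) (σ : κ → ι) {A : ι → B} {t : ι} {X Y : B}
    {c : ι → Bool} (hA : ∀ k, k ≠ t → A k = boolObj X Y (c k)) {e : Bool → B} {u : Bool → Bool}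
    (he : ∀ s, e s = boolObj X Y (u s)) {b : κ → Bool}
    (hb : ∀ j, b j = if σ j = t then u (α j) else c (σ j)) :
    tupMV α σ A t e = markTup X Y α b := by
  funext j
  simp only [tupMV, markTup, hb]
  split_ifs with hj
  · rw [he]
  · rw [hA _ hj]

theorem tupMVHom_eq_markHom (α : κ → Bool) (σ : κ → ι) {A : ι → B} {t : ι} {X Y : B}
    (f : X ⟶ Y) {c : ι → Bool} (hA : ∀ k, k ≠ t → A k = boolObj X Y (c k))
    {e₁ e₂ : Bool → B} {u₁ u₂ : Bool → Bool}
    (he₁ : ∀ s, e₁ s = boolObj X Y (u₁ s)) (he₂ : ∀ s, e₂ s = boolObj X Y (u₂ s))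
    {g : e₂ false ⟶ e₁ false} {h : e₁ true ⟶ e₂ true}
    {hlo : u₂ false ≤ u₁ false} {hhi : u₁ true ≤ u₂ true}
    (hg : g ≍ boolHom f _ _ hlo) (hh : h ≍ boolHom f _ _ hhi) {b₁ b₂ : κ → Bool}
    (hb₁ : ∀ j, b₁ j = if σ j = t then u₁ (α j) else c (σ j))
    (hb₂ : ∀ j, b₂ j = if σ j = t then u₂ (α j) else c (σ j))
    (hb : ∀ j, SignLE (α j) (b₁ j) (b₂ j)) :
    tupMVHom α σ A t e₁ e₂ g h = eqToHom (tupMV_eq_markTup α σ hA he₁ hb₁) ≫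
      markHom f α b₁ b₂ hb ≫ eqToHom (tupMV_eq_markTup α σ hA he₂ hb₂).symm := by
  obtain rfl : e₁ = _ := funext he₁
  obtain rfl : e₂ = _ := funext he₂
  obtain rfl := eq_of_heq hg
  obtain rfl := eq_of_heq hh
  have hT₁ := tupMV_eq_markTup α σ hA he₁ hb₁
  have hT₂ := tupMV_eq_markTup α σ hA he₂ hb₂
  refine (conj_eqToHom_iff_heq _ _ hT₁ hT₂).2 (PowCat.hom_heq hT₁ hT₂ fun j => ?_)
  by_cases hj : σ j = t
  · have hs : SignLE (α j) (u₁ (α j)) (u₂ (α j)) := by simpa [hb₁ j, hb₂ j, hj] using hb j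
    refine (tupMVHom_apply_of_eq _ _ hj).trans ?_
    rw [mvHom_boolHom f hlo hhi (α j) hs]
    refine toSignHom_heq ?_ ?_ (signedBoolHom_heq f (α j) ?_ ?_ _ _) <;>
      simp only [hb₁ j, hb₂ j, if_pos hj]
  · have h₁ : c (σ j) = b₁ j := by rw [hb₁ j, if_neg hj]
    have h₂ : c (σ j) = b₂ j := by rw [hb₂ j, if_neg hj]
    refine (tupMVHom_apply_of_ne _ _ hj).trans ?_
    rw [hA _ hj, ← signedBoolHom_self f (α j) (c (σ j))]
    exact toSignHom_heq (by rw [h₁]) (by rw [h₂]) (signedBoolHom_heq f (α j) h₁ h₂ _ _)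

end Conversion

section Transport

variable {B : Type u} [Category.{v} B] {C : Type u'} [Category.{v'} C]
variable {κa κb ι : Type} {α : κa → Bool} {β : κb → Bool}
variable {F : PowCat B α ⥤ C} {G : PowCat B β ⥤ C} {σ : κa → ι} {τ : κb → ι}

theorem Transf.app_eq_of_eq (φ : Transf α β F G σ τ) {A₁ A₂ : ι → B} (h : A₁ = A₂) :
    φ A₁ = eqToHom (by rw [h]) ≫ φ A₂ ≫ eqToHom (by rw [h]) := by
  subst h
  simp

end Transport

section Dinaturality

variable {B : Type u} [Category.{v} B] {C : Type u'} [Category.{v'} C]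
variable {κa κb ι : Type} [DecidableEq ι] {α : κa → Bool} {β : κb → Bool}
variable {F : PowCat B α ⥤ C} {G : PowCat B β ⥤ C} {σ : κa → ι} {τ : κb → ι}

theorem signLE_upd_of_eq_ite_not {c : ι → Bool} {t : ι} {a : κa → Bool}
    (ha : ∀ j, a j = if σ j = t then !α j else c (σ j)) (v : Bool) (j : κa) :
    SignLE (α j) (a j) (upd c t v (σ j)) := by
  by_cases hj : σ j = t <;> simp [ha j, hj, upd, SignLE.not_self_left, SignLE.refl]

theorem signLE_upd_of_eq_ite_self {c : ι → Bool} {t : ι} {b : κb → Bool}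
    (hb : ∀ j, b j = if τ j = t then β j else c (τ j)) (v : Bool) (j : κb) :
    SignLE (β j) (upd c t v (τ j)) (b j) := by
  by_cases hj : τ j = t <;> simp [hb j, hj, upd, SignLE.self_right, SignLE.refl]

theorem signLE_ite_not_of_forall_upd {c : ι → Bool} {t : ι} {a : κa → Bool}
    (ha : ∀ v j, SignLE (α j) (a j) (upd c t v (σ j))) (j : κa) :
    SignLE (α j) (a j) (if σ j = t then !α j else c (σ j)) := by
  by_cases hj : σ j = t
  · have h₀ := ha false j
    have h₁ := ha true j
    simp only [upd, hj, if_true] at h₀ h₁ ⊢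
    exact SignLE.not_self_of_false_of_true h₀ h₁
  · simpa [upd, hj] using ha false j

theorem signLE_ite_self_of_forall_upd {c : ι → Bool} {t : ι} {b : κb → Bool}
    (hb : ∀ v j, SignLE (β j) (upd c t v (τ j)) (b j)) (j : κb) :
    SignLE (β j) (if τ j = t then β j else c (τ j)) (b j) := by
  by_cases hj : τ j = t
  · have h₀ := hb false j
    have h₁ := hb true j
    simp only [upd, hj, if_true] at h₀ h₁ ⊢
    exact SignLE.self_of_false_of_true h₀ h₁
  · simpa [upd, hj] using hb false j

-- For `v = false` (resp. `true`) the left-hand side is, up to unfolding `boolObj` and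
-- `boolHom`, the left (resp. right) side of the equation `DinatAt φ t` at `A`.
theorem map_tupMVHom_comp_app_comp_map_tupMVHom_heq (φ : Transf α β F G σ τ) {t : ι}
    {A : ι → B} {X Y : B} (f : X ⟶ Y) {c : ι → Bool}
    (hA : ∀ k, k ≠ t → A k = boolObj X Y (c k)) {a : κa → Bool}
    (ha : ∀ j, a j = if σ j = t then !α j else c (σ j)) {b : κb → Bool}
    (hb : ∀ j, b j = if τ j = t then β j else c (τ j)) (v : Bool) :
    F.map (tupMVHom α σ A t (fun s => bif s then X else Y) (fun _ => boolObj X Y v)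
        (boolHom f v true (Bool.le_true v)) (boolHom f false v (Bool.false_le v))) ≫
      φ (upd A t (boolObj X Y v)) ≫
      G.map (tupMVHom β τ A t (fun _ => boolObj X Y v) (fun s => bif s then Y else X)
        (boolHom f false v (Bool.false_le v)) (boolHom f v true (Bool.le_true v))) ≍
    F.map (markHom f α a (fun j => upd c t v (σ j)) (signLE_upd_of_eq_ite_not ha v)) ≫
      φ (fun x => boolObj X Y (upd c t v x)) ≫
      G.map (markHom f β (fun j => upd c t v (τ j)) b (signLE_upd_of_eq_ite_self hb v)) := by
  have hnot : ∀ s, (bif s then X else Y) = boolObj X Y (!s) := by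
    intro s; cases s <;> rfl
  have hAv : upd A t (boolObj X Y v) = fun x => boolObj X Y (upd c t v x) := by
    funext k
    by_cases hk : k = t <;> simp [upd, hk, hA k]
  rw [tupMVHom_eq_markHom α σ f hA (u₁ := fun s => !s) (u₂ := fun _ => v)
      (g := boolHom f v true (Bool.le_true v)) (h := boolHom f false v (Bool.false_le v))
      hnot (fun _ => rfl) HEq.rfl HEq.rfl ha (fun _ => rfl) (signLE_upd_of_eq_ite_not ha v),
    tupMVHom_eq_markHom β τ f hA (u₁ := fun _ => v) (u₂ := fun s => s)
      (g := boolHom f false v (Bool.false_le v)) (h := boolHom f v true (Bool.le_true v))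
      (fun _ => rfl) (fun _ => rfl) HEq.rfl HEq.rfl (fun _ => rfl) hb
      (signLE_upd_of_eq_ite_self hb v),
    Transf.app_eq_of_eq φ hAv]
  simp only [Functor.map_comp, eqToHom_map, Category.assoc, eqToHom_trans_assoc,
    eqToHom_refl, Category.id_comp, eqToHom_comp_heq_iff]
  rw [← Category.assoc, ← Category.assoc, comp_eqToHom_heq_iff, Category.assoc]

theorem DinatAt.fire {φ : Transf α β F G σ τ} {t : ι} (hφ : DinatAt φ t) {X Y : B} (f : X ⟶ Y)
    (c : ι → Bool) {a : κa → Bool} {b : κb → Bool}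
    (ha : ∀ v j, SignLE (α j) (a j) (upd c t v (σ j)))
    (hb : ∀ v j, SignLE (β j) (upd c t v (τ j)) (b j)) :
    F.map (markHom f α a _ (ha false)) ≫ φ (fun x => boolObj X Y (upd c t false x)) ≫
        G.map (markHom f β _ b (hb false)) =
      F.map (markHom f α a _ (ha true)) ≫ φ (fun x => boolObj X Y (upd c t true x)) ≫
        G.map (markHom f β _ b (hb true)) := by
  set lo : κa → Bool := fun j => if σ j = t then !α j else c (σ j)
  set hi : κb → Bool := fun j => if τ j = t then β j else c (τ j)
  have hlo : ∀ v j, SignLE (α j) (lo j) (upd c t v (σ j)) :=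
    signLE_upd_of_eq_ite_not (fun _ => rfl)
  have hhi : ∀ v j, SignLE (β j) (upd c t v (τ j)) (hi j) :=
    signLE_upd_of_eq_ite_self (fun _ => rfl)
  have hside := map_tupMVHom_comp_app_comp_map_tupMVHom_heq φ f
    (A := fun x => boolObj X Y (c x)) (fun _ _ => rfl) (a := lo) (fun _ => rfl) (b := hi)
    (fun _ => rfl)
  have hsquare := (hside false).symm.trans ((heq_of_eq (hφ _ f)).trans (hside true))
  have ha_lo : ∀ j, SignLE (α j) (a j) (lo j) := signLE_ite_not_of_forall_upd ha
  have hhi_b : ∀ j, SignLE (β j) (hi j) (b j) := signLE_ite_self_of_forall_upd hb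
  rw [← markHom_comp f α ha_lo (hlo false), ← markHom_comp f α ha_lo (hlo true),
    ← markHom_comp f β (hhi false) hhi_b, ← markHom_comp f β (hhi true) hhi_b]
  simp only [Functor.map_comp, Category.assoc]
  rw [reassoc_of% (eq_of_heq hsquare)]

end Dinaturality

section MarkedComposite

variable {B : Type u} [Category.{v} B] {C : Type u'} [Category.{v'} C]
variable {κa κb κc ι₁ ι₂ : Type} {α : κa → Bool} {β : κb → Bool} {γ : κc → Bool}
variable {F₁ : PowCat B α ⥤ C} {F₂ : PowCat B β ⥤ C} {F₃ : PowCat B γ ⥤ C}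
variable {σ₁ : κa → ι₁} {τ₁ : κb → ι₁} {σ₂ : κb → ι₂} {τ₂ : κc → ι₂}

def markedComp (φ : Transf α β F₁ F₂ σ₁ τ₁) (ψ : Transf β γ F₂ F₃ σ₂ τ₂) {X Y : B} (f : X ⟶ Y)
    (c : ι₁ → Bool) (d : ι₂ → Bool) (hcd : ∀ j, SignLE (β j) (c (τ₁ j)) (d (σ₂ j))) :
    F₁.obj (markTup X Y α fun j => !α j) ⟶ F₃.obj (markTup X Y γ γ) :=
  F₁.map (markHom f α _ _ fun _ => SignLE.not_self_left _ _) ≫ φ (fun x => boolObj X Y (c x)) ≫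
    F₂.map (markHom f β _ _ hcd) ≫ ψ (fun x => boolObj X Y (d x)) ≫
    F₃.map (markHom f γ _ _ fun _ => SignLE.self_right _ _)

variable {φ : Transf α β F₁ F₂ σ₁ τ₁} {ψ : Transf β γ F₂ F₃ σ₂ τ₂} {X Y : B} (f : X ⟶ Y)

theorem markedComp_congr {c c' : ι₁ → Bool} {d d' : ι₂ → Bool} (hc : c = c') (hd : d = d')
    (h : ∀ j, SignLE (β j) (c (τ₁ j)) (d (σ₂ j))) (h' : ∀ j, SignLE (β j) (c' (τ₁ j)) (d' (σ₂ j))) :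
    markedComp φ ψ f c d h = markedComp φ ψ f c' d' h' := by
  subst hc hd
  rfl

theorem markedComp_fire_left [DecidableEq ι₁] (hφ : ∀ x, DinatAt φ x) {c : ι₁ → Bool}
    {d : ι₂ → Bool} {t : ι₁} (hct : c t = false)
    (hsucc : ∀ j, τ₁ j = t → β j = true → d (σ₂ j) = true)
    (hcd : ∀ j, SignLE (β j) (c (τ₁ j)) (d (σ₂ j))) :
    ∃ h, markedComp φ ψ f c d hcd = markedComp φ ψ f (upd c t true) d h := by
  have hadm : ∀ v j, SignLE (β j) (upd c t v (τ₁ j)) (d (σ₂ j)) := by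
    rintro (_ | _) j
    · rw [upd_self_of_eq hct]
      exact hcd j
    · by_cases hj : τ₁ j = t
      · cases hβ : β j
        · simp [SignLE, upd, hj]
        · simp [SignLE, upd, hj, hsucc j hj hβ]
      · simpa [upd, hj] using hcd j
  refine ⟨hadm true, ?_⟩
  rw [markedComp_congr f (upd_self_of_eq hct).symm rfl hcd (hadm false)]
  unfold markedComp
  rw [reassoc_of% (hφ t).fire f c (fun _ _ => SignLE.not_self_left _ _) hadm]

theorem markedComp_fire_right [DecidableEq ι₂] (hψ : ∀ x, DinatAt ψ x) {c : ι₁ → Bool}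
    {d : ι₂ → Bool} {t : ι₂} (hdt : d t = false)
    (hpred : ∀ j, σ₂ j = t → β j = false → c (τ₁ j) = true)
    (hcd : ∀ j, SignLE (β j) (c (τ₁ j)) (d (σ₂ j))) :
    ∃ h, markedComp φ ψ f c d hcd = markedComp φ ψ f c (upd d t true) h := by
  have hadm : ∀ v j, SignLE (β j) (c (τ₁ j)) (upd d t v (σ₂ j)) := by
    rintro (_ | _) j
    · rw [upd_self_of_eq hdt]
      exact hcd j
    · by_cases hj : σ₂ j = t
      · cases hβ : β j
        · simp [SignLE, upd, hj, hpred j hj hβ]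
        · simp [SignLE, upd, hj]
      · simpa [upd, hj] using hcd j
  refine ⟨hadm true, ?_⟩
  rw [markedComp_congr f rfl (upd_self_of_eq hdt).symm hcd (hadm false)]
  unfold markedComp
  rw [(hψ t).fire f d hadm fun _ _ => SignLE.self_right _ _]

theorem map_markHom_comp_vcomp_comp_map_markHom {ι : Type} (ζ : ι₁ → ι) (ξ : ι₂ → ι)
    (hcomm : ∀ p, ζ (τ₁ p) = ξ (σ₂ p)) (c : ι → Bool) :
    F₁.map (markHom f α (fun j => !α j) (fun j => c (ζ (σ₁ j)))
        fun _ => SignLE.not_self_left _ _) ≫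
      vcomp φ ψ ζ ξ hcomm (fun x => boolObj X Y (c x)) ≫
      F₃.map (markHom f γ (fun j => c (ξ (τ₂ j))) γ fun _ => SignLE.self_right _ _) =
    markedComp φ ψ f (fun y => c (ζ y)) (fun z => c (ξ z))
      (fun j => by rw [hcomm]; exact SignLE.refl _ _) := by
  unfold markedComp vcomp
  rw [markHom_eq_eqToHom f β (funext fun j => congrArg c (hcomm j)), eqToHom_map]
  simp only [Category.assoc]

end MarkedComposite

section TokenGame

variable {B : Type u} [Category.{v} B] {C : Type u'} [Category.{v'} C]
variable {wa wb wc n m : ℕ} {α : Fin wa → Bool} {β : Fin wb → Bool} {γ : Fin wc → Bool}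
variable {F₁ : PowCat B α ⥤ C} {F₂ : PowCat B β ⥤ C} {F₃ : PowCat B γ ⥤ C}
variable {σ₁ : Fin wa → Fin n} {τ₁ : Fin wb → Fin n} {σ₂ : Fin wb → Fin m} {τ₂ : Fin wc → Fin m}
variable {φ : Transf α β F₁ F₂ σ₁ τ₁} {ψ : Transf β γ F₂ F₃ σ₂ τ₂}

theorem transGen_compArc_of_true {j : Fin wb} (hβ : β j = true) :
    Relation.TransGen (compArc α β γ σ₁ τ₁ σ₂ τ₂) (.inr (.inl (τ₁ j))) (.inr (.inr (σ₂ j))) :=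
  Relation.TransGen.tail (b := (.inl (.inr (.inl j)) : CGV wa wb wc n m)) (.single ⟨rfl, hβ⟩)
    ⟨rfl, hβ⟩

theorem transGen_compArc_of_false {j : Fin wb} (hβ : β j = false) :
    Relation.TransGen (compArc α β γ σ₁ τ₁ σ₂ τ₂) (.inr (.inr (σ₂ j))) (.inr (.inl (τ₁ j))) :=
  Relation.TransGen.tail (b := (.inl (.inr (.inl j)) : CGV wa wb wc n m)) (.single ⟨rfl, hβ⟩)
    ⟨rfl, hβ⟩

theorem markedComp_false_eq_true (hφ : ∀ x, DinatAt φ x) (hψ : ∀ x, DinatAt ψ x)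
    (hacyclic : ∀ v : CGV wa wb wc n m, ¬ Relation.TransGen (compArc α β γ σ₁ τ₁ σ₂ τ₂) v v)
    {X Y : B} (f : X ⟶ Y) :
    markedComp φ ψ f (fun _ => false) (fun _ => false) (fun _ => SignLE.refl _ _) =
      markedComp φ ψ f (fun _ => true) (fun _ => true) (fun _ => SignLE.refl _ _) := by
  let Reachable (N : (Fin n → Bool) × (Fin m → Bool)) : Prop :=
    ∃ h, markedComp φ ψ f (fun _ => false) (fun _ => false) (fun _ => SignLE.refl _ _) =
      markedComp φ ψ f N.1 N.2 h
  suffices hTop : Reachable ⊤ from hTop.2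
  refine WellFoundedGT.induction_top ⟨(fun _ => false, fun _ => false), _, rfl⟩ ?_
  rintro ⟨c, d⟩ hN ⟨hcd, hreach⟩
  obtain ⟨a₀, ha₀⟩ : ∃ a, Sum.elim c d a = false := by
    by_contra! hall
    exact hN (Prod.ext (funext fun t => by simpa using hall (.inl t))
      (funext fun t => by simpa using hall (.inr t)))
  obtain ⟨_, ⟨a, ha, rfl⟩, hmax⟩ := exists_forall_not_transGen_of_acyclic hacyclic
    (S := Sum.inr '' {a | Sum.elim c d a = false}) ⟨_, a₀, ha₀, rfl⟩
  rcases a with t | t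
  · have hct : c t = false := ha
    obtain ⟨h, hfire⟩ := markedComp_fire_left f hφ hct (fun j hj hβ => by
      by_contra hd
      exact hmax _ ⟨.inr (σ₂ j), by simpa using hd, rfl⟩ (hj ▸ transGen_compArc_of_true hβ)) hcd
    exact ⟨_, Prod.mk_lt_mk_iff_left.2 (lt_upd_of_lt (hct ▸ Bool.false_lt_true)), h,
      hreach.trans hfire⟩
  · have hdt : d t = false := ha
    obtain ⟨h, hfire⟩ := markedComp_fire_right f hψ hdt (fun j hj hβ => by
      by_contra hc
      exact hmax _ ⟨.inl (τ₁ j), by simpa using hc, rfl⟩ (hj ▸ transGen_compArc_of_false hβ)) hcd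
    exact ⟨_, Prod.mk_lt_mk_iff_right.2 (lt_upd_of_lt (hdt ▸ Bool.false_lt_true)), h,
      hreach.trans hfire⟩

end TokenGame

theorem vcomp_dinatural_of_acyclic_one_variable_general
    {B : Type u} [Category.{v} B] {C : Type u'} [Category.{v'} C]
    {wa wb wc n m : ℕ}
    {α : Fin wa → Bool} {β : Fin wb → Bool} {γ : Fin wc → Bool}
    {F₁ : PowCat B α ⥤ C} {F₂ : PowCat B β ⥤ C} {F₃ : PowCat B γ ⥤ C}
    {σ₁ : Fin wa → Fin n} {τ₁ : Fin wb → Fin n} {σ₂ : Fin wb → Fin m} {τ₂ : Fin wc → Fin m}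
    (φ : Transf α β F₁ F₂ σ₁ τ₁) (ψ : Transf β γ F₂ F₃ σ₂ τ₂)
    (hφ : ∀ x, DinatAt φ x) (hψ : ∀ x, DinatAt ψ x)
    (ζ : Fin n → Fin 1) (ξ : Fin m → Fin 1)
    (hcomm : ∀ p, ζ (τ₁ p) = ξ (σ₂ p))
    (hacyclic : ∀ v : CGV wa wb wc n m,
      ¬ Relation.TransGen (compArc α β γ σ₁ τ₁ σ₂ τ₂) v v) :
    ∀ i, DinatAt (vcomp φ ψ ζ ξ hcomm) i := by
  intro i A X Y f
  have hi : ∀ k, k = i := fun k => Subsingleton.elim k i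
  have hside := map_tupMVHom_comp_app_comp_map_tupMVHom_heq (vcomp φ ψ ζ ξ hcomm) f
    (A := A) (c := fun _ => false) (fun k hk => absurd (hi k) hk) (a := fun j => !α j)
    (fun _ => by simp [hi]) (b := γ) (fun _ => by simp [hi])
  refine eq_of_heq ((hside false).trans (HEq.trans (heq_of_eq ?_) (hside true).symm))
  rw [map_markHom_comp_vcomp_comp_map_markHom f ζ ξ hcomm (upd (fun _ => false) i false),
    map_markHom_comp_vcomp_comp_map_markHom f ζ ξ hcomm (upd (fun _ => false) i true)]
  convert markedComp_false_eq_true hφ hψ hacyclic f using 2 <;> funext <;> simp [hi]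

/-- Let `φ : F₁ → F₂` and `ψ : F₂ → F₃` be transformations, dinatural in
all of their variables, such that the pushout defining the type of `ψ ∘ φ` has vertex `1`
(i.e. `ψ ∘ φ` depends on only one variable).  If the composite graph `Γ(ψ) ∘ Γ(φ)` is
acyclic, then `ψ ∘ φ` is dinatural in its unique variable. -/
theorem vcomp_dinatural_of_acyclic_one_variable
    {B : Type u} [Category.{v} B] {C : Type u'} [Category.{v'} C]
    {wa wb wc n m : ℕ} (hn : 0 < n) (hm : 0 < m)
    {α : Fin wa → Bool} {β : Fin wb → Bool} {γ : Fin wc → Bool}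
    {F₁ : PowCat B α ⥤ C} {F₂ : PowCat B β ⥤ C} {F₃ : PowCat B γ ⥤ C}
    {σ₁ : Fin wa → Fin n} {τ₁ : Fin wb → Fin n} {σ₂ : Fin wb → Fin m} {τ₂ : Fin wc → Fin m}
    (φ : Transf α β F₁ F₂ σ₁ τ₁) (ψ : Transf β γ F₂ F₃ σ₂ τ₂)
    (hφ : ∀ x, DinatAt φ x) (hψ : ∀ x, DinatAt ψ x)
    (ζ : Fin n → Fin 1) (ξ : Fin m → Fin 1)
    (hcomm : ∀ p, ζ (τ₁ p) = ξ (σ₂ p))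
    (hpush : ∀ (Z : Type) (u : Fin n → Z) (v : Fin m → Z), (∀ p, u (τ₁ p) = v (σ₂ p)) →
      ∃! w : Fin 1 → Z, (∀ x, w (ζ x) = u x) ∧ ∀ y, w (ξ y) = v y)
    (hacyclic : ∀ v : CGV wa wb wc n m,
      ¬ Relation.TransGen (compArc α β γ σ₁ τ₁ σ₂ τ₂) v v) :
    ∀ i, DinatAt (vcomp φ ψ ζ ξ hcomm) i :=
  vcomp_dinatural_of_acyclic_one_variable_general φ ψ hφ hψ ζ ξ hcomm hacyclic
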